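/- arXiv:2506.01791 — 3 statements merged into one kernel-verified Lean document; each statement's English description precedes it below -/
import Mathlib

section
/- Let f₁, f₂ : ℝ^d → ℝ be differentiable with curvatures in [μ₁, L₁] and [μ₂, L₂] (μ₁ < L₁, μ₂ < L₂), and let xₖ, xₖ₊₁ satisfy ∇f₁(xₖ₊₁) = ∇f₂(xₖ). With Δx = xₖ − xₖ₊₁ and Gᵏ⁺¹ = ∇f₁(xₖ₊₁) − ∇f₂(xₖ₊₁), it holds that ⟨Gᵏ⁺¹, Δx⟩ ≥ μ₂‖Δx‖² + ‖Gᵏ⁺¹ − μ₂Δx‖²/(L₂−μ₂). -/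
/-!
Put `g = f₂ - μ₂ ‖·‖² / 2`: it is convex and `g - (L₂ - μ₂) ‖·‖² / 2` is concave, so `∇ g` is
`1 / (L₂ - μ₂)`-cocoercive (Baillon–Haddad), which comes from sandwiching `g` between its tangent
plane at one point and its quadratic upper bound at the other. Cocoercivity at `xₖ, xₖ₊₁` is the
claim once the DCA step replaces `∇ f₂ xₖ` by `∇ f₁ xₖ₊₁`.
-/

open Set
open scoped RealInnerProductSpace Gradient

variable {F : Type*} [NormedAddCommGroup F] [InnerProductSpace ℝ F] [CompleteSpace F]

theorem HasGradientAt.sub {f g : F → ℝ} {f' g' x : F} (hf : HasGradientAt f f' x)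
    (hg : HasGradientAt g g' x) : HasGradientAt (fun z => f z - g z) (f' - g') x := by
  rw [hasGradientAt_iff_hasFDerivAt, map_sub]
  exact hf.hasFDerivAt.sub hg.hasFDerivAt

theorem hasGradientAt_half_mul_norm_sq (c : ℝ) (x : F) :
    HasGradientAt (fun y : F => c / 2 * ‖y‖ ^ 2) (c • x) x := by
  rw [hasGradientAt_iff_hasFDerivAt]
  refine ((hasStrictFDerivAt_norm_sq x).hasFDerivAt.const_mul (c / 2)).congr_fderiv ?_
  ext v
  simp only [smul_apply, coe_innerSL_apply, nsmul_eq_mul, Nat.cast_ofNat, smul_eq_mul,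
    map_smul, InnerProductSpace.toDual_apply_apply]
  ring

theorem ConvexOn.add_inner_le_of_hasGradientAt {s : Set F} {g : F → ℝ} {g' x y : F}
    (hg : ConvexOn ℝ s g) (hx : x ∈ s) (hy : y ∈ s) (hg' : HasGradientAt g g' x) :
    g x + ⟪g', y - x⟫ ≤ g y := by
  set ℓ : ℝ →ᵃ[ℝ] F := AffineMap.lineMap x y
  have hℓ0 : ℓ 0 = x := AffineMap.lineMap_apply_zero x y
  have hℓ1 : ℓ 1 = y := AffineMap.lineMap_apply_one x y
  have hderiv : HasDerivAt (g ∘ ℓ) ⟪g', y - x⟫ 0 := by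
    rw [← hℓ0] at hg'
    simpa using hg'.hasFDerivAt.comp_hasDerivAt (0 : ℝ) AffineMap.hasDerivAt_lineMap
  have := (hg.comp_affineMap ℓ).le_slope_of_hasDerivAt (x := 0) (y := 1)
    (by rwa [mem_preimage, hℓ0]) (by rwa [mem_preimage, hℓ1]) zero_lt_one hderiv
  simp only [slope_def_field, Function.comp_apply, hℓ0, hℓ1, sub_zero, div_one] at this
  linarith

theorem le_add_inner_add_half_mul_norm_sq {s : Set F} {g : F → ℝ} {g' x y : F} {c : ℝ}
    (hsmooth : ConvexOn ℝ s (fun z => c / 2 * ‖z‖ ^ 2 - g z)) (hx : x ∈ s) (hy : y ∈ s)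
    (hg' : HasGradientAt g g' x) :
    g y ≤ g x + ⟪g', y - x⟫ + c / 2 * ‖y - x‖ ^ 2 := by
  have h := hsmooth.add_inner_le_of_hasGradientAt hx hy
    ((hasGradientAt_half_mul_norm_sq c x).sub hg')
  rw [inner_sub_left, real_inner_smul_left, inner_sub_right, real_inner_self_eq_norm_sq] at h
  rw [norm_sub_sq_real, real_inner_comm x y]
  linear_combination h

theorem add_inner_gradient_add_norm_sq_div_le {g : F → ℝ} {c : ℝ} (hc : 0 < c)
    (hg : Differentiable ℝ g) (hconv : ConvexOn ℝ univ g)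
    (hsmooth : ConvexOn ℝ univ (fun z => c / 2 * ‖z‖ ^ 2 - g z)) (x y : F) :
    g x + ⟪∇ g x, y - x⟫ + ‖∇ g y - ∇ g x‖ ^ 2 / (2 * c) ≤ g y := by
  set u := ∇ g y - ∇ g x
  -- `z` minimizes the gap between the upper bound at `y` and the lower bound at `x`
  set z := y - c⁻¹ • u
  have hlower := hconv.add_inner_le_of_hasGradientAt (mem_univ x) (mem_univ z)
    (hg x).hasGradientAt
  have hupper := le_add_inner_add_half_mul_norm_sq hsmooth (mem_univ y) (mem_univ z)
    (hg y).hasGradientAt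
  have hzy : z - y = -(c⁻¹ • u) := by simp [z]
  have hzx : z - x = (y - x) - c⁻¹ • u := by simp only [z]; abel
  have hu : ⟪∇ g y, u⟫ - ⟪∇ g x, u⟫ = ‖u‖ ^ 2 := by
    rw [← inner_sub_left, real_inner_self_eq_norm_sq]
  rw [hzx, inner_sub_right, real_inner_smul_right] at hlower
  rw [hzy, inner_neg_right, real_inner_smul_right, norm_neg, norm_smul, mul_pow,
    Real.norm_of_nonneg (inv_nonneg.mpr hc.le)] at hupper
  have key : ‖u‖ ^ 2 / (2 * c) =
      c⁻¹ * (⟪∇ g y, u⟫ - ⟪∇ g x, u⟫) - c / 2 * (c⁻¹ ^ 2 * ‖u‖ ^ 2) := by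
    rw [hu]; field_simp; ring
  linarith

theorem norm_sub_gradient_sq_div_le_inner {g : F → ℝ} {c : ℝ} (hc : 0 < c)
    (hg : Differentiable ℝ g) (hconv : ConvexOn ℝ univ g)
    (hsmooth : ConvexOn ℝ univ (fun z => c / 2 * ‖z‖ ^ 2 - g z)) (x y : F) :
    ‖∇ g x - ∇ g y‖ ^ 2 / c ≤ ⟪∇ g x - ∇ g y, x - y⟫ := by
  have hxy := add_inner_gradient_add_norm_sq_div_le hc hg hconv hsmooth x y
  have hyx := add_inner_gradient_add_norm_sq_div_le hc hg hconv hsmooth y x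
  rw [norm_sub_rev] at hxy
  have hinner : ⟪∇ g x - ∇ g y, x - y⟫ = -⟪∇ g x, y - x⟫ - ⟪∇ g y, x - y⟫ := by
    rw [inner_sub_left, ← neg_sub x y, inner_neg_right]; ring
  have hsplit : ‖∇ g x - ∇ g y‖ ^ 2 / c =
      ‖∇ g x - ∇ g y‖ ^ 2 / (2 * c) + ‖∇ g x - ∇ g y‖ ^ 2 / (2 * c) := by
    field_simp; ring
  linarith

theorem inner_gradient_sub_ge_of_curvature {f : F → ℝ} {μ L : ℝ} (hf : Differentiable ℝ f)
    (hμL : μ < L) (hL : ConvexOn ℝ univ (fun x => L / 2 * ‖x‖ ^ 2 - f x))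
    (hμ : ConvexOn ℝ univ (fun x => f x - μ / 2 * ‖x‖ ^ 2)) (x y : F) :
    μ * ‖x - y‖ ^ 2 + ‖(∇ f x - ∇ f y) - μ • (x - y)‖ ^ 2 / (L - μ) ≤
      ⟪∇ f x - ∇ f y, x - y⟫ := by
  set g : F → ℝ := fun z => f z - μ / 2 * ‖z‖ ^ 2
  have hgrad : ∀ z, HasGradientAt g (∇ f z - μ • z) z :=
    fun z => (hf z).hasGradientAt.sub (hasGradientAt_half_mul_norm_sq μ z)
  have hsmooth : ConvexOn ℝ univ (fun z => (L - μ) / 2 * ‖z‖ ^ 2 - g z) := by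
    convert hL using 2 with z
    simp only [g]; ring
  have hco := norm_sub_gradient_sq_div_le_inner (sub_pos.mpr hμL)
    (fun z => (hgrad z).differentiableAt) hμ hsmooth x y
  have hgrad_sub : ∇ g x - ∇ g y = (∇ f x - ∇ f y) - μ • (x - y) := by
    rw [gradient_eq hgrad]; module
  rw [hgrad_sub, inner_sub_left _ _ (x - y), real_inner_smul_left,
    real_inner_self_eq_norm_sq] at hco
  linarith

theorem stmt_3_general {d : ℕ} (f₁ f₂ : EuclideanSpace ℝ (Fin d) → ℝ) (μ₂ L₂ : ℝ)
    (hf₂ : Differentiable ℝ f₂)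
    (h₂ : μ₂ < L₂)
    (hL₂ : ConvexOn ℝ univ (fun x => L₂ / 2 * ‖x‖ ^ 2 - f₂ x))
    (hμ₂ : ConvexOn ℝ univ (fun x => f₂ x - μ₂ / 2 * ‖x‖ ^ 2))
    (xk xk1 : EuclideanSpace ℝ (Fin d))
    (hDCA : gradient f₁ xk1 = gradient f₂ xk) :
    ⟪gradient f₁ xk1 - gradient f₂ xk1, xk - xk1⟫ ≥
      μ₂ * ‖xk - xk1‖ ^ 2 +
      ‖(gradient f₁ xk1 - gradient f₂ xk1) - μ₂ • (xk - xk1)‖ ^ 2 / (L₂ - μ₂) := by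
  rw [hDCA]
  exact inner_gradient_sub_ge_of_curvature hf₂ h₂ hL₂ hμ₂ xk xk1

theorem stmt_3 {d : ℕ} (f₁ f₂ : EuclideanSpace ℝ (Fin d) → ℝ) (μ₁ L₁ μ₂ L₂ : ℝ)
    (hf₁ : Differentiable ℝ f₁) (hf₂ : Differentiable ℝ f₂)
    (h₁ : μ₁ < L₁) (h₂ : μ₂ < L₂)
    (hL₁ : ConvexOn ℝ univ (fun x => L₁ / 2 * ‖x‖ ^ 2 - f₁ x))
    (hμ₁ : ConvexOn ℝ univ (fun x => f₁ x - μ₁ / 2 * ‖x‖ ^ 2))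
    (hL₂ : ConvexOn ℝ univ (fun x => L₂ / 2 * ‖x‖ ^ 2 - f₂ x))
    (hμ₂ : ConvexOn ℝ univ (fun x => f₂ x - μ₂ / 2 * ‖x‖ ^ 2))
    (xk xk1 : EuclideanSpace ℝ (Fin d))
    (hDCA : gradient f₁ xk1 = gradient f₂ xk) :
    ⟪gradient f₁ xk1 - gradient f₂ xk1, xk - xk1⟫ ≥
      μ₂ * ‖xk - xk1‖ ^ 2 +
      ‖(gradient f₁ xk1 - gradient f₂ xk1) - μ₂ • (xk - xk1)‖ ^ 2 / (L₂ - μ₂) :=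
  stmt_3_general f₁ f₂ μ₂ L₂ hf₂ h₂ hL₂ hμ₂ xk xk1 hDCA
end

section
/- Let f₁, f₂ : ℝ^d → ℝ be differentiable with curvatures in [μ₁, L₁] and [μ₂, L₂] respectively, where 0 < L₂ ≤ μ₁ < L₁, μ₂ ∈ [−L₂μ₁/(L₂+μ₁), L₂), μ₁ + μ₂ > 0. Let x₀, x₁, x₂ satisfy ∇f₁(x₁) = ∇f₂(x₀) and ∇f₁(x₂) = ∇f₂(x₁). Then F(x₀) − F(x₁) ≥ (μ₁²(L₂+μ₁)/L₂²)·(1/2)‖x₁ − x₂‖², where F = f₁ − f₂. -/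
/-!
Put `g = ∇f₂ x₀ - ∇f₂ x₁ = ∇f₁ x₁ - ∇f₁ x₂`, `v = x₀ - x₁` and `u = g - μ₂ v`. Strong convexity
of `f₁` gives `μ₁ ‖x₁ - x₂‖ ≤ ‖g‖`, so it suffices to show `(L₂ + μ₁) ‖g‖² ≤ 2 L₂² (F x₀ - F x₁)`.
The lower quadratic model of `f₁` at `x₁` and the interpolation inequality of `f₂` between `x₀`
and `x₁` give `2 (F x₀ - F x₁) ≥ (μ₁ + μ₂) ‖v‖² + ‖u‖² / (L₂ - μ₂)`. Co-coercivity
`‖u‖² ≤ (L₂ - μ₂) ⟪u, v⟫` bounds `‖g‖² = ‖u + μ₂ v‖²` by `L₂² / (L₂ + μ₁)` times the right-hand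
side; this last step is where `μ₂ ≥ -L₂ μ₁ / (L₂ + μ₁)` is needed.
-/

open Set
open scoped RealInnerProductSpace

theorem ConvexOn.add_fderiv_sub_le {E : Type*} [NormedAddCommGroup E] [NormedSpace ℝ E]
    {φ : E → ℝ} {φ' : E →L[ℝ] ℝ} {x : E} (hφ : ConvexOn ℝ univ φ) (hx : HasFDerivAt φ φ' x)
    (y : E) : φ x + φ' (y - x) ≤ φ y := by
  let ℓ : ℝ →ᵃ[ℝ] E := AffineMap.lineMap x y
  have hℓ : HasDerivAt (φ ∘ ℓ) (φ' (y - x)) 0 := by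
    rw [← AffineMap.lineMap_apply_zero x y (k := ℝ)] at hx
    exact hx.comp_hasDerivAt 0 AffineMap.hasDerivAt_lineMap
  have := (hφ.comp_affineMap ℓ).le_slope_of_hasDerivAt (mem_univ 0) (mem_univ 1) one_pos hℓ
  simp [slope_def_field, ℓ] at this
  linarith [map_sub φ' y x]

section InnerProductSpace

variable {E : Type*} [NormedAddCommGroup E] [InnerProductSpace ℝ E]

theorem norm_sq_eq_add_inner_sub_add_norm_sub_sq (x y : E) :
    ‖y‖ ^ 2 = ‖x‖ ^ 2 + 2 * ⟪x, y - x⟫ + ‖y - x‖ ^ 2 := by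
  simpa using norm_add_sq_real x (y - x)

theorem mul_norm_add_smul_sq_le {u v : E} {m L μ : ℝ} (hL : 0 ≤ L) (hμ : 0 ≤ μ) (hmL : m ≤ L)
    (hm : -(L * μ) ≤ m * (L + μ)) (huv : ‖u‖ ^ 2 ≤ (L - m) * ⟪u, v⟫) :
    (L - m) * (L + μ) * ‖u + m • v‖ ^ 2 ≤ L ^ 2 * ((L - m) * (μ + m) * ‖v‖ ^ 2 + ‖u‖ ^ 2) := by
  have hs : ‖u + m • v‖ ^ 2 = ‖u‖ ^ 2 + 2 * m * ⟪u, v⟫ + m ^ 2 * ‖v‖ ^ 2 := by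
    rw [norm_add_sq_real, real_inner_smul_right, norm_smul, mul_pow, Real.norm_eq_abs, sq_abs]
    ring
  have hq : ⟪u, v⟫ ≤ ‖u‖ * ‖v‖ := real_inner_le_norm u v
  have hLm : 0 ≤ L - m := sub_nonneg.2 hmL
  have hn : ‖u‖ ≤ (L - m) * ‖v‖ := by
    rcases (norm_nonneg u).eq_or_lt with h | h
    · rw [← h]; positivity
    · refine le_of_mul_le_mul_right ?_ h
      nlinarith [mul_le_mul_of_nonneg_left hq hLm]
  set e := (L - m) * ‖v‖ - ‖u‖
  have he : 0 ≤ e := sub_nonneg.2 hn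
  rcases le_or_gt 0 m with hm₀ | hm₀
  · have hs' : ‖u + m • v‖ ^ 2 ≤ (‖u‖ + m * ‖v‖) ^ 2 := by
      nlinarith [mul_le_mul_of_nonneg_left hq hm₀]
    have h₁ : 0 ≤ L * μ * (L - m) * ‖v‖ * e := by positivity
    have h₂ : 0 ≤ m * (L + μ) * e ^ 2 := by positivity
    have h₃ : 0 ≤ L * μ * e * ‖u‖ := by positivity
    calc (L - m) * (L + μ) * ‖u + m • v‖ ^ 2 ≤ (L - m) * (L + μ) * (‖u‖ + m * ‖v‖) ^ 2 := by
          gcongr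
      _ ≤ _ := by linear_combination h₁ + h₂ + h₃
  · have hs' : (L - m) * ‖u + m • v‖ ^ 2 ≤ (L + m) * ‖u‖ ^ 2 + (L - m) * m ^ 2 * ‖v‖ ^ 2 := by
      nlinarith [mul_le_mul_of_nonpos_left huv (by linarith : 2 * m ≤ 0)]
    have hK : 0 ≤ (L * μ + m * (L + μ)) * (((L - m) * ‖v‖) ^ 2 - ‖u‖ ^ 2) := by
      have : ‖u‖ ^ 2 ≤ ((L - m) * ‖v‖) ^ 2 := by gcongr
      exact mul_nonneg (by linarith) (by linarith)
    calc (L - m) * (L + μ) * ‖u + m • v‖ ^ 2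
        = (L + μ) * ((L - m) * ‖u + m • v‖ ^ 2) := by ring
      _ ≤ (L + μ) * ((L + m) * ‖u‖ ^ 2 + (L - m) * m ^ 2 * ‖v‖ ^ 2) := by gcongr
      _ ≤ _ := by linear_combination hK

variable [CompleteSpace E] {f : E → ℝ} {c m L : ℝ} {x y : E}

theorem add_inner_gradient_add_sq_le (hf : DifferentiableAt ℝ f x)
    (hc : ConvexOn ℝ univ fun z => f z - c / 2 * ‖z‖ ^ 2) (y : E) :
    f x + ⟪gradient f x, y - x⟫ + c / 2 * ‖y - x‖ ^ 2 ≤ f y := by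
  have hφ : HasFDerivAt (fun z => f z - c / 2 * ‖z‖ ^ 2)
      (fderiv ℝ f x - (c / 2) • (2 • innerSL ℝ x)) x :=
    hf.hasFDerivAt.sub ((hasStrictFDerivAt_norm_sq x).hasFDerivAt.const_mul (c / 2))
  have := hc.add_fderiv_sub_le hφ y
  simp only [sub_apply, smul_apply, innerSL_apply_apply, ← inner_gradient_left, smul_eq_mul,
    nsmul_eq_mul, Nat.cast_ofNat] at this
  linear_combination this - c / 2 * norm_sq_eq_add_inner_sub_add_norm_sub_sq x y

theorem le_add_inner_gradient_add_sq (hf : DifferentiableAt ℝ f x)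
    (hc : ConvexOn ℝ univ fun z => c / 2 * ‖z‖ ^ 2 - f z) (y : E) :
    f y ≤ f x + ⟪gradient f x, y - x⟫ + c / 2 * ‖y - x‖ ^ 2 := by
  have hφ : HasFDerivAt (fun z => c / 2 * ‖z‖ ^ 2 - f z)
      ((c / 2) • (2 • innerSL ℝ x) - fderiv ℝ f x) x :=
    ((hasStrictFDerivAt_norm_sq x).hasFDerivAt.const_mul (c / 2)).sub hf.hasFDerivAt
  have := hc.add_fderiv_sub_le hφ y
  simp only [sub_apply, smul_apply, innerSL_apply_apply, ← inner_gradient_left, smul_eq_mul,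
    nsmul_eq_mul, Nat.cast_ofNat] at this
  linear_combination this + c / 2 * norm_sq_eq_add_inner_sub_add_norm_sub_sq x y

theorem mul_norm_sub_sq_le_inner_gradient_sub (hx : DifferentiableAt ℝ f x)
    (hy : DifferentiableAt ℝ f y) (hc : ConvexOn ℝ univ fun z => f z - c / 2 * ‖z‖ ^ 2) :
    c * ‖x - y‖ ^ 2 ≤ ⟪gradient f x - gradient f y, x - y⟫ := by
  have hxy := add_inner_gradient_add_sq_le hx hc y
  have hyx := add_inner_gradient_add_sq_le hy hc x
  rw [← neg_sub x y, inner_neg_right, norm_neg] at hxy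
  rw [inner_sub_left]
  linarith

theorem mul_norm_sub_le_norm_gradient_sub (hx : DifferentiableAt ℝ f x)
    (hy : DifferentiableAt ℝ f y) (hc : ConvexOn ℝ univ fun z => f z - c / 2 * ‖z‖ ^ 2) :
    c * ‖x - y‖ ≤ ‖gradient f x - gradient f y‖ := by
  rcases (norm_nonneg (x - y)).eq_or_lt with h | h
  · rw [← h, mul_zero]; positivity
  refine le_of_mul_le_mul_right ?_ h
  calc c * ‖x - y‖ * ‖x - y‖ = c * ‖x - y‖ ^ 2 := by ring
    _ ≤ ⟪gradient f x - gradient f y, x - y⟫ := mul_norm_sub_sq_le_inner_gradient_sub hx hy hc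
    _ ≤ _ := real_inner_le_norm _ _

theorem norm_gradient_sub_sub_smul_sq_le (hx : DifferentiableAt ℝ f x)
    (hy : DifferentiableAt ℝ f y) (hmL : m < L)
    (hm : ConvexOn ℝ univ fun z => f z - m / 2 * ‖z‖ ^ 2)
    (hL : ConvexOn ℝ univ fun z => L / 2 * ‖z‖ ^ 2 - f z) :
    ‖gradient f x - gradient f y - m • (x - y)‖ ^ 2 ≤
      2 * (L - m) * (f y - f x - ⟪gradient f x, y - x⟫ - m / 2 * ‖y - x‖ ^ 2) := by
  set u := gradient f x - gradient f y - m • (x - y)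
  set k := (L - m)⁻¹
  -- compare the lower model of `f` at `x` with its upper model at `y`, at the point `y + k • u`
  have hA := add_inner_gradient_add_sq_le hx hm (y + k • u)
  have hB := le_add_inner_gradient_add_sq hy hL (y + k • u)
  rw [add_sub_right_comm, norm_add_sq_real, inner_add_right] at hA
  rw [add_sub_cancel_left] at hB
  simp only [inner_smul_right, norm_smul, mul_pow, Real.norm_eq_abs, sq_abs] at hA hB
  have hu : ‖u‖ ^ 2 = ⟪gradient f x, u⟫ - ⟪gradient f y, u⟫ + m * ⟪y - x, u⟫ := by
    rw [← real_inner_self_eq_norm_sq]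
    change ⟪gradient f x - gradient f y - m • (x - y), u⟫ = _
    rw [inner_sub_left, inner_sub_left, real_inner_smul_left, ← neg_sub y x, inner_neg_left]
    ring
  have hk : k * ‖u‖ ^ 2 - (L - m) / 2 * k ^ 2 * ‖u‖ ^ 2 ≤
      f y - f x - ⟪gradient f x, y - x⟫ - m / 2 * ‖y - x‖ ^ 2 := by
    linear_combination hA + hB + k * hu
  calc ‖u‖ ^ 2 = 2 * (L - m) * (k * ‖u‖ ^ 2 - (L - m) / 2 * k ^ 2 * ‖u‖ ^ 2) := by
        linear_combination (‖u‖ ^ 2 * ((L - m) * k - 1)) * mul_inv_cancel₀ (sub_pos.2 hmL).ne'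
    _ ≤ _ := by gcongr

theorem norm_gradient_sub_sub_smul_sq_le_inner (hx : DifferentiableAt ℝ f x)
    (hy : DifferentiableAt ℝ f y) (hmL : m < L)
    (hm : ConvexOn ℝ univ fun z => f z - m / 2 * ‖z‖ ^ 2)
    (hL : ConvexOn ℝ univ fun z => L / 2 * ‖z‖ ^ 2 - f z) :
    ‖gradient f x - gradient f y - m • (x - y)‖ ^ 2 ≤
      (L - m) * ⟪gradient f x - gradient f y - m • (x - y), x - y⟫ := by
  have hxy := norm_gradient_sub_sub_smul_sq_le hx hy hmL hm hL
  have hyx := norm_gradient_sub_sub_smul_sq_le hy hx hmL hm hL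
  have hu : gradient f y - gradient f x - m • (y - x) =
      -(gradient f x - gradient f y - m • (x - y)) := by module
  rw [hu, norm_neg] at hyx
  rw [← neg_sub x y, inner_neg_right, norm_neg] at hxy
  rw [inner_sub_left, inner_sub_left, real_inner_smul_left, real_inner_self_eq_norm_sq]
  linear_combination (hxy + hyx) / 2

end InnerProductSpace

theorem stmt_11_general {d : ℕ} (f₁ f₂ : EuclideanSpace ℝ (Fin d) → ℝ) (μ₁ μ₂ L₂ : ℝ)
    (hf₁ : Differentiable ℝ f₁) (hf₂ : Differentiable ℝ f₂)
    (hL₂pos : 0 < L₂) (hL₂μ₁ : L₂ ≤ μ₁)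
    (hμ₂ : μ₂ ∈ Set.Ico (-L₂ * μ₁ / (L₂ + μ₁)) L₂)
    (hcμ₁ : ConvexOn ℝ univ (fun x => f₁ x - μ₁ / 2 * ‖x‖ ^ 2))
    (hcL₂ : ConvexOn ℝ univ (fun x => L₂ / 2 * ‖x‖ ^ 2 - f₂ x))
    (hcμ₂ : ConvexOn ℝ univ (fun x => f₂ x - μ₂ / 2 * ‖x‖ ^ 2))
    (x₀ x₁ x₂ : EuclideanSpace ℝ (Fin d))
    (hDCA₀ : gradient f₁ x₁ = gradient f₂ x₀)
    (hDCA₁ : gradient f₁ x₂ = gradient f₂ x₁) :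
    (f₁ x₀ - f₂ x₀) - (f₁ x₁ - f₂ x₁) ≥
      μ₁ ^ 2 * (L₂ + μ₁) / L₂ ^ 2 * (1 / 2) * ‖x₁ - x₂‖ ^ 2 := by
  obtain ⟨hμ₂_lb, hμ₂L₂⟩ := hμ₂
  have hμ₁ : 0 < μ₁ := hL₂pos.trans_le hL₂μ₁
  have hμ₂_lb' : -(L₂ * μ₁) ≤ μ₂ * (L₂ + μ₁) := by
    rw [div_le_iff₀ (by positivity)] at hμ₂_lb; linarith
  set g := gradient f₂ x₀ - gradient f₂ x₁
  set Δ := (f₁ x₀ - f₂ x₀) - (f₁ x₁ - f₂ x₁)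
  have hf₁_lower := add_inner_gradient_add_sq_le (hf₁ x₁) hcμ₁ x₀
  have hf₂_interp := norm_gradient_sub_sub_smul_sq_le (hf₂ x₀) (hf₂ x₁) hμ₂L₂ hcμ₂ hcL₂
  rw [hDCA₀] at hf₁_lower
  rw [← neg_sub x₀ x₁, inner_neg_right, norm_neg] at hf₂_interp
  have hdesc : (L₂ - μ₂) * (μ₁ + μ₂) * ‖x₀ - x₁‖ ^ 2 + ‖g - μ₂ • (x₀ - x₁)‖ ^ 2 ≤
      2 * (L₂ - μ₂) * Δ := by
    linear_combination 2 * (L₂ - μ₂) * hf₁_lower + hf₂_interp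
  have hg : (L₂ - μ₂) * (L₂ + μ₁) * ‖g‖ ^ 2 ≤
      L₂ ^ 2 * ((L₂ - μ₂) * (μ₁ + μ₂) * ‖x₀ - x₁‖ ^ 2 + ‖g - μ₂ • (x₀ - x₁)‖ ^ 2) := by
    simpa using mul_norm_add_smul_sq_le hL₂pos.le hμ₁.le hμ₂L₂.le hμ₂_lb'
      (norm_gradient_sub_sub_smul_sq_le_inner (hf₂ x₀) (hf₂ x₁) hμ₂L₂ hcμ₂ hcL₂)
  have hΔ : (L₂ + μ₁) * ‖g‖ ^ 2 ≤ 2 * L₂ ^ 2 * Δ := by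
    refine le_of_mul_le_mul_left ?_ (sub_pos.2 hμ₂L₂)
    linarith [mul_le_mul_of_nonneg_left hdesc (sq_nonneg L₂)]
  have hw : μ₁ * ‖x₁ - x₂‖ ≤ ‖g‖ := by
    simpa [hDCA₀, hDCA₁] using mul_norm_sub_le_norm_gradient_sub (hf₁ x₁) (hf₁ x₂) hcμ₁
  calc μ₁ ^ 2 * (L₂ + μ₁) / L₂ ^ 2 * (1 / 2) * ‖x₁ - x₂‖ ^ 2
      = (L₂ + μ₁) * (μ₁ * ‖x₁ - x₂‖) ^ 2 / (2 * L₂ ^ 2) := by ring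
    _ ≤ (L₂ + μ₁) * ‖g‖ ^ 2 / (2 * L₂ ^ 2) := by gcongr
    _ ≤ Δ := by rw [div_le_iff₀ (by positivity)]; linarith

theorem stmt_11 {d : ℕ} (f₁ f₂ : EuclideanSpace ℝ (Fin d) → ℝ) (μ₁ L₁ μ₂ L₂ : ℝ)
    (hf₁ : Differentiable ℝ f₁) (hf₂ : Differentiable ℝ f₂)
    (hL₂pos : 0 < L₂) (hL₂μ₁ : L₂ ≤ μ₁) (h₁ : μ₁ < L₁)
    (hμ₂ : μ₂ ∈ Set.Ico (-L₂ * μ₁ / (L₂ + μ₁)) L₂)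
    (hsum : μ₁ + μ₂ > 0)
    (hcL₁ : ConvexOn ℝ univ (fun x => L₁ / 2 * ‖x‖ ^ 2 - f₁ x))
    (hcμ₁ : ConvexOn ℝ univ (fun x => f₁ x - μ₁ / 2 * ‖x‖ ^ 2))
    (hcL₂ : ConvexOn ℝ univ (fun x => L₂ / 2 * ‖x‖ ^ 2 - f₂ x))
    (hcμ₂ : ConvexOn ℝ univ (fun x => f₂ x - μ₂ / 2 * ‖x‖ ^ 2))
    (x₀ x₁ x₂ : EuclideanSpace ℝ (Fin d))
    (hDCA₀ : gradient f₁ x₁ = gradient f₂ x₀)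
    (hDCA₁ : gradient f₁ x₂ = gradient f₂ x₁) :
    (f₁ x₀ - f₂ x₀) - (f₁ x₁ - f₂ x₁) ≥
      μ₁ ^ 2 * (L₂ + μ₁) / L₂ ^ 2 * (1 / 2) * ‖x₁ - x₂‖ ^ 2 :=
  stmt_11_general f₁ f₂ μ₁ μ₂ L₂ hf₁ hf₂ hL₂pos hL₂μ₁ hμ₂ hcμ₁ hcL₂ hcμ₂ x₀ x₁ x₂ hDCA₀ hDCA₁
end

section
/- Let f₁, f₂ : ℝ^d → ℝ be differentiable with curvatures in [μ₁, L₁] and [μ₂, L₂] respectively (μ₁ < L₁, μ₂ < L₂), with μ₁ + μ₂ > 0 and L₂ + μ₂ ≤ 0. Let x⁰, …, x^{N+1} be generated by DCA (∇f₁(x^{k+1}) = ∇f₂(x^k)), N ≥ 1. Then (1/2)‖x^N − x^{N+1}‖² ≤ (F(x⁰) − F(x^{N+1})) / (μ₁ + μ₂ + μ₁·E_N(μ₂/μ₁)), where E_N(z) = Σ_{j=1}^{2N} z^{−j} and F = f₁ − f₂. -/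
open Set

noncomputable def E (N : ℕ) (z : ℝ) : ℝ := ∑ j ∈ Finset.Icc 1 (2 * N), z ^ (-(j : ℤ))

open RealInnerProductSpace

/-!
Each DCA step decreases `F` by at least `(μ₁ + μ₂) / 2 * ‖x (k + 1) - x k‖ ^ 2` (add the
first-order lower bounds of `f₁` at `x (k + 1)` and of `f₂` at `x k`, which share the gradient),
so telescoping bounds the sum of the squared steps by `F (x 0) - F (x (N + 1))`.
Since `L₂ ≤ -μ₂`, the curvature of `f₂` lies in `[μ₂, -μ₂]`, and cocoercivity of the convex
function `f₂ - μ₂ / 2 * ‖·‖ ^ 2` shows that `∇f₂` is `(-μ₂)`-Lipschitz. Together with strong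
monotonicity of `∇f₁` this gives the contraction
`μ₁ * ‖x (k + 2) - x (k + 1)‖ ≤ -μ₂ * ‖x (k + 1) - x k‖`, so the `k`-th squared step is at least
`(μ₁ / μ₂) ^ (2 * (N - k))` times the last one. Summing, the weights form a geometric sum which
equals `(μ₁ + μ₂ + μ₁ * E N (μ₂ / μ₁)) / (μ₁ + μ₂)`.
-/

theorem ConvexOn.add_apply_sub_le_of_hasFDerivAt {W : Type*} [NormedAddCommGroup W]
    [NormedSpace ℝ W] {f : W → ℝ} {f' : W →L[ℝ] ℝ} {x : W}
    (hf : ConvexOn ℝ univ f) (hx : HasFDerivAt f f' x) (y : W) : f x + f' (y - x) ≤ f y := by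
  let ℓ : ℝ →ᵃ[ℝ] W := AffineMap.lineMap x y
  have hline : ConvexOn ℝ univ (f ∘ ℓ) := by simpa using hf.comp_affineMap ℓ
  have hderiv : HasDerivAt (f ∘ ℓ) (f' (y - x)) 0 := by
    have hx' : HasFDerivAt f f' (AffineMap.lineMap x y (0 : ℝ)) := by simpa using hx
    exact hx'.comp_hasDerivAt 0 AffineMap.hasDerivAt_lineMap
  have := hline.le_slope_of_hasDerivAt (mem_univ 0) (mem_univ 1) one_pos hderiv
  simp only [slope_def_field, Function.comp_apply, ℓ, AffineMap.lineMap_apply_zero,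
    AffineMap.lineMap_apply_one, sub_zero, div_one] at this
  linarith

theorem strongConvexOn_neg_iff {V : Type*} [NormedAddCommGroup V] [InnerProductSpace ℝ V]
    {s : Set V} {f : V → ℝ} {L : ℝ} :
    StrongConvexOn s (-L) (-f) ↔ ConvexOn ℝ s (fun x => L / 2 * ‖x‖ ^ 2 - f x) := by
  have hquad : (fun x => (-f) x - -L / 2 * ‖x‖ ^ 2) = fun x => L / 2 * ‖x‖ ^ 2 - f x := by
    funext x
    simp only [Pi.neg_apply]
    ring
  rw [strongConvexOn_iff_convex, hquad]

section Gradient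

variable {V : Type*} [NormedAddCommGroup V] [InnerProductSpace ℝ V] [CompleteSpace V]
  {f : V → ℝ} {G : V → V} {g x : V} {m L : ℝ}

theorem HasGradientAt.neg (hx : HasGradientAt f g x) : HasGradientAt (fun y => -f y) (-g) x := by
  rw [hasGradientAt_iff_hasFDerivAt, map_neg]
  exact hx.hasFDerivAt.neg

theorem HasGradientAt.sub_half_mul_norm_sq (hx : HasGradientAt f g x) (m : ℝ) :
    HasGradientAt (fun y => f y - m / 2 * ‖y‖ ^ 2) (g - m • x) x := by
  rw [hasGradientAt_iff_hasFDerivAt]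
  refine (hx.hasFDerivAt.sub
    ((hasStrictFDerivAt_norm_sq x).hasFDerivAt.const_mul (m / 2))).congr_fderiv ?_
  ext v
  simp
  ring

theorem StrongConvexOn.add_inner_add_le_of_hasGradientAt (hf : StrongConvexOn univ m f)
    (hx : HasGradientAt f g x) (y : V) :
    f x + ⟪g, y - x⟫ + m / 2 * ‖y - x‖ ^ 2 ≤ f y := by
  have := (strongConvexOn_iff_convex.1 hf).add_apply_sub_le_of_hasFDerivAt
    (hx.sub_half_mul_norm_sq m).hasFDerivAt y
  simp only [InnerProductSpace.toDual_apply_apply] at this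
  simp only [inner_sub_left, inner_sub_right, real_inner_smul_left, real_inner_self_eq_norm_sq]
    at this ⊢
  rw [norm_sub_sq_real, real_inner_comm x y] at *
  linarith

theorem StrongConvexOn.le_add_inner_add_of_hasGradientAt (hf : StrongConvexOn univ (-L) (-f))
    (hx : HasGradientAt f g x) (y : V) :
    f y ≤ f x + ⟪g, y - x⟫ + L / 2 * ‖y - x‖ ^ 2 := by
  have := hf.add_inner_add_le_of_hasGradientAt hx.neg y
  simp only [Pi.neg_apply, inner_neg_left] at this
  linarith

theorem StrongConvexOn.mul_norm_sub_sq_le_inner (hf : StrongConvexOn univ m f)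
    (hG : ∀ x, HasGradientAt f (G x) x) (a b : V) :
    m * ‖a - b‖ ^ 2 ≤ ⟪G a - G b, a - b⟫ := by
  have hab := hf.add_inner_add_le_of_hasGradientAt (hG a) b
  have hba := hf.add_inner_add_le_of_hasGradientAt (hG b) a
  have hflip : ⟪G a, b - a⟫ = -⟪G a, a - b⟫ := by rw [← inner_neg_right, neg_sub]
  rw [norm_sub_rev] at hab
  rw [inner_sub_left]
  linarith

theorem ConvexOn.add_inner_add_norm_sub_sq_le (hf : ConvexOn ℝ univ f)
    (hf' : StrongConvexOn univ (-L) (-f)) (hL : 0 < L) (hG : ∀ x, HasGradientAt f (G x) x)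
    (p q : V) : f p + ⟪G p, q - p⟫ + ‖G q - G p‖ ^ 2 / (2 * L) ≤ f q := by
  set u := G q - G p
  -- compare both first-order bounds at the point `q - L⁻¹ • (∇f q - ∇f p)`
  have hlow := (strongConvexOn_zero.2 hf).add_inner_add_le_of_hasGradientAt (hG p) (q - L⁻¹ • u)
  have hup := hf'.le_add_inner_add_of_hasGradientAt (hG q) (q - L⁻¹ • u)
  have hwq : q - L⁻¹ • u - q = -(L⁻¹ • u) := by abel
  have hwp : q - L⁻¹ • u - p = (q - p) - L⁻¹ • u := by abel
  have hu : ⟪G q, u⟫ - ⟪G p, u⟫ = ‖u‖ ^ 2 := by rw [← inner_sub_left, real_inner_self_eq_norm_sq]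
  rw [hwq, inner_neg_right, real_inner_smul_right, norm_neg, norm_smul, mul_pow,
    Real.norm_eq_abs, sq_abs] at hup
  rw [hwp, inner_sub_right, real_inner_smul_right] at hlow
  have hquad : L / 2 * (L⁻¹ ^ 2 * ‖u‖ ^ 2) = L⁻¹ / 2 * ‖u‖ ^ 2 := by
    field_simp
  have hdiv : ‖u‖ ^ 2 / (2 * L) = L⁻¹ / 2 * ‖u‖ ^ 2 := by ring
  linear_combination hlow + hup - L⁻¹ * hu + hquad - hdiv

theorem ConvexOn.norm_sub_sq_le_mul_inner (hf : ConvexOn ℝ univ f)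
    (hf' : StrongConvexOn univ (-L) (-f)) (hL : 0 < L) (hG : ∀ x, HasGradientAt f (G x) x)
    (a b : V) : ‖G a - G b‖ ^ 2 ≤ L * ⟪G a - G b, a - b⟫ := by
  have hab := hf.add_inner_add_norm_sub_sq_le hf' hL hG a b
  have hba := hf.add_inner_add_norm_sub_sq_le hf' hL hG b a
  have hflip : ⟪G a, b - a⟫ = -⟪G a, a - b⟫ := by rw [← inner_neg_right, neg_sub]
  rw [norm_sub_rev] at hab
  have : ‖G a - G b‖ ^ 2 / L ≤ ⟪G a - G b, a - b⟫ := by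
    rw [inner_sub_left]
    linarith [show ‖G a - G b‖ ^ 2 / L = 2 * (‖G a - G b‖ ^ 2 / (2 * L)) by field_simp]
  rwa [div_le_iff₀' hL] at this

theorem StrongConvexOn.norm_sub_le_of_strongConvexOn_neg {μ : ℝ} (hf : StrongConvexOn univ μ f)
    (hf' : StrongConvexOn univ μ (-f)) (hμ : μ < 0) (hG : ∀ x, HasGradientAt f (G x) x)
    (a b : V) : ‖G a - G b‖ ≤ -μ * ‖a - b‖ := by
  -- `f - μ/2 ‖·‖²` is convex with curvature at most `-2μ`; apply cocoercivity to it
  have hg : ConvexOn ℝ univ (fun y => f y - μ / 2 * ‖y‖ ^ 2) := strongConvexOn_iff_convex.1 hf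
  have hg' : StrongConvexOn univ (-(-2 * μ)) (-fun y => f y - μ / 2 * ‖y‖ ^ 2) := by
    rw [strongConvexOn_neg_iff]
    convert strongConvexOn_iff_convex.1 hf' using 2 with y
    simp only [Pi.neg_apply]
    ring
  have h := hg.norm_sub_sq_le_mul_inner hg' (by linarith) (fun y => (hG y).sub_half_mul_norm_sq μ)
    a b
  have hdiff : G a - μ • a - (G b - μ • b) = (G a - G b) - μ • (a - b) := by
    rw [smul_sub]; abel
  rw [hdiff] at h
  generalize G a - G b = p at h ⊢
  generalize a - b = w at h ⊢
  simp only [norm_sub_sq_real, inner_sub_left, real_inner_smul_right, real_inner_smul_left,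
    real_inner_self_eq_norm_sq, norm_smul, mul_pow, Real.norm_eq_abs, sq_abs] at h
  have hsq : ‖p‖ ^ 2 ≤ (-μ * ‖w‖) ^ 2 := by linear_combination h
  exact (pow_le_pow_iff_left₀ (norm_nonneg _) (mul_nonneg (by linarith) (norm_nonneg w))
    two_ne_zero).1 hsq

end Gradient

section DCA

variable {V : Type*} [NormedAddCommGroup V] [InnerProductSpace ℝ V] [CompleteSpace V]
  {f₁ f₂ : V → ℝ} {G₁ G₂ : V → V} {μ₁ μ₂ : ℝ}

theorem dca_step_descent {g x y : V} (h₁ : StrongConvexOn univ μ₁ f₁)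
    (h₂ : StrongConvexOn univ μ₂ f₂) (hy : HasGradientAt f₁ g y) (hx : HasGradientAt f₂ g x) :
    (μ₁ + μ₂) / 2 * ‖y - x‖ ^ 2 ≤ (f₁ x - f₂ x) - (f₁ y - f₂ y) := by
  have hyx := h₁.add_inner_add_le_of_hasGradientAt hy x
  have hxy := h₂.add_inner_add_le_of_hasGradientAt hx y
  have hflip : ⟪g, x - y⟫ = -⟪g, y - x⟫ := by rw [← inner_neg_right, neg_sub]
  rw [norm_sub_rev] at hyx
  linarith

theorem dca_sum_sq_le (h₁ : StrongConvexOn univ μ₁ f₁) (h₂ : StrongConvexOn univ μ₂ f₂)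
    (hG₁ : ∀ x, HasGradientAt f₁ (G₁ x) x) (hG₂ : ∀ x, HasGradientAt f₂ (G₂ x) x)
    {x : ℕ → V} {n : ℕ} (hx : ∀ k < n, G₁ (x (k + 1)) = G₂ (x k)) :
    (μ₁ + μ₂) / 2 * ∑ k ∈ Finset.range n, ‖x (k + 1) - x k‖ ^ 2 ≤
      (f₁ (x 0) - f₂ (x 0)) - (f₁ (x n) - f₂ (x n)) := by
  rw [Finset.mul_sum, ← Finset.sum_range_sub' (fun k => f₁ (x k) - f₂ (x k))]
  refine Finset.sum_le_sum fun k hk => dca_step_descent h₁ h₂ ?_ (hG₂ _)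
  rw [← hx k (Finset.mem_range.1 hk)]
  exact hG₁ _

theorem dca_step_contraction {K : ℝ} {x y z : V} (h₁ : StrongConvexOn univ μ₁ f₁)
    (hG₁ : ∀ x, HasGradientAt f₁ (G₁ x) x) (hG₂ : ∀ a b, ‖G₂ a - G₂ b‖ ≤ K * ‖a - b‖)
    (hy : G₁ y = G₂ x) (hz : G₁ z = G₂ y) : μ₁ * ‖z - y‖ ≤ K * ‖y - x‖ := by
  have hmono := h₁.mul_norm_sub_sq_le_inner hG₁ z y
  rw [hz, hy] at hmono
  rcases (norm_nonneg (z - y)).eq_or_lt with hzero | hpos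
  · rw [← hzero, mul_zero]
    exact (norm_nonneg _).trans (hG₂ y x)
  · refine le_of_mul_le_mul_right ?_ hpos
    calc μ₁ * ‖z - y‖ * ‖z - y‖ = μ₁ * ‖z - y‖ ^ 2 := by ring
      _ ≤ ⟪G₂ y - G₂ x, z - y⟫ := hmono
      _ ≤ ‖G₂ y - G₂ x‖ * ‖z - y‖ := real_inner_le_norm _ _
      _ ≤ K * ‖y - x‖ * ‖z - y‖ := mul_le_mul_of_nonneg_right (hG₂ y x) (norm_nonneg _)

end DCA

section GeometricSums

open Finset

theorem pow_mul_le_of_mul_succ_le {D : ℕ → ℝ} {q : ℝ} {N : ℕ} (hq : 0 ≤ q)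
    (hD : ∀ k < N, q * D (k + 1) ≤ D k) : ∀ m k, k + m ≤ N → q ^ m * D (k + m) ≤ D k := by
  intro m
  induction m with
  | zero => simp
  | succ m ih =>
    intro k hk
    calc q ^ (m + 1) * D (k + (m + 1)) = q * (q ^ m * D (k + 1 + m)) := by
          rw [show k + 1 + m = k + (m + 1) by omega]; ring
      _ ≤ q * D (k + 1) := mul_le_mul_of_nonneg_left (ih (k + 1) (by omega)) hq
      _ ≤ D k := hD k (by omega)

theorem sum_pow_mul_sq_le_sum_sq {D : ℕ → ℝ} {q : ℝ} {N : ℕ} (hD₀ : ∀ k, 0 ≤ D k) (hq : 0 ≤ q)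
    (hD : ∀ k < N, q * D (k + 1) ≤ D k) :
    (∑ k ∈ range (N + 1), (q ^ 2) ^ k) * D N ^ 2 ≤ ∑ k ∈ range (N + 1), D k ^ 2 := by
  rw [← sum_range_reflect, sum_mul]
  refine sum_le_sum fun k hk => ?_
  have hkN : k + (N + 1 - 1 - k) = N := by have := mem_range.1 hk; omega
  have h := pow_mul_le_of_mul_succ_le hq hD (N + 1 - 1 - k) k hkN.le
  rw [hkN] at h
  calc (q ^ 2) ^ (N + 1 - 1 - k) * D N ^ 2 = (q ^ (N + 1 - 1 - k) * D N) ^ 2 := by ring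
    _ ≤ D k ^ 2 := pow_le_pow_left₀ (by have := hD₀ N; positivity) h 2

theorem one_add_add_E_eq {z : ℝ} (hz : z ≠ 0) (N : ℕ) :
    1 + z + E N z = (1 + z) * ∑ i ∈ range (N + 1), (z⁻¹ ^ 2) ^ i := by
  induction N with
  | zero => simp [E]
  | succ N ih =>
    have hsplit : E (N + 1) z = E N z + z⁻¹ ^ (2 * N + 1) + z⁻¹ ^ (2 * N + 2) := by
      rw [E, E, show 2 * (N + 1) = 2 * N + 1 + 1 by ring, sum_Icc_succ_top (by omega),
        sum_Icc_succ_top (by omega)]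
      simp only [zpow_neg, zpow_natCast, inv_pow]
    have hpair : z⁻¹ ^ (2 * N + 1) + z⁻¹ ^ (2 * N + 2) = (1 + z) * (z⁻¹ ^ 2) ^ (N + 1) := by
      linear_combination (-z⁻¹ ^ (2 * N + 1)) * mul_inv_cancel₀ hz
    rw [hsplit, sum_range_succ, mul_add, ← ih, ← hpair]
    ring

theorem add_add_mul_E_eq {a b : ℝ} (ha : a ≠ 0) (hb : b ≠ 0) (N : ℕ) :
    a + b + a * E N (b / a) = (a + b) * ∑ k ∈ range (N + 1), ((a / b) ^ 2) ^ k := by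
  have hE := one_add_add_E_eq (div_ne_zero hb ha) N
  rw [inv_div] at hE
  linear_combination a * hE + (∑ k ∈ range (N + 1), ((a / b) ^ 2) ^ k - 1) * mul_div_cancel₀ b ha

end GeometricSums

theorem stmt_16_general {d : ℕ} (f₁ f₂ : EuclideanSpace ℝ (Fin d) → ℝ) (μ₁ μ₂ L₂ : ℝ)
    (hf₁ : Differentiable ℝ f₁) (hf₂ : Differentiable ℝ f₂)
    (h₂ : μ₂ < L₂)
    (hsum : μ₁ + μ₂ > 0) (hL₂μ₂ : L₂ + μ₂ ≤ 0)
    (hcμ₁ : ConvexOn ℝ univ (fun x => f₁ x - μ₁ / 2 * ‖x‖ ^ 2))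
    (hcL₂ : ConvexOn ℝ univ (fun x => L₂ / 2 * ‖x‖ ^ 2 - f₂ x))
    (hcμ₂ : ConvexOn ℝ univ (fun x => f₂ x - μ₂ / 2 * ‖x‖ ^ 2))
    (N : ℕ) (x : ℕ → EuclideanSpace ℝ (Fin d))
    (hDCA : ∀ k ≤ N, gradient f₁ (x (k + 1)) = gradient f₂ (x k)) :
    (1 / 2) * ‖x N - x (N + 1)‖ ^ 2 ≤
      ((f₁ (x 0) - f₂ (x 0)) - (f₁ (x (N + 1)) - f₂ (x (N + 1)))) /
        (μ₁ + μ₂ + μ₁ * E N (μ₂ / μ₁)) := by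
  have hμ₂ : μ₂ < 0 := by linarith
  have hμ₁ : 0 < μ₁ := by linarith
  have hG₁ := fun y => (hf₁ y).hasGradientAt
  have hG₂ := fun y => (hf₂ y).hasGradientAt
  have sc₁ : StrongConvexOn univ μ₁ f₁ := strongConvexOn_iff_convex.2 hcμ₁
  have sc₂ : StrongConvexOn univ μ₂ f₂ := strongConvexOn_iff_convex.2 hcμ₂
  have sc₂' : StrongConvexOn univ μ₂ (-f₂) :=
    (strongConvexOn_neg_iff.2 hcL₂).mono (by linarith)
  have hlip := sc₂.norm_sub_le_of_strongConvexOn_neg sc₂' hμ₂ hG₂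
  have hstep : ∀ k < N, μ₁ / -μ₂ * ‖x (k + 1 + 1) - x (k + 1)‖ ≤ ‖x (k + 1) - x k‖ := by
    intro k hk
    rw [div_mul_eq_mul_div, div_le_iff₀ (by linarith), mul_comm _ (-μ₂)]
    exact dca_step_contraction sc₁ hG₁ hlip (hDCA k hk.le) (hDCA (k + 1) hk)
  have hgeom := sum_pow_mul_sq_le_sum_sq (D := fun k => ‖x (k + 1) - x k‖)
    (fun k => norm_nonneg _) (div_nonneg hμ₁.le (by linarith)) hstep
  have hdesc := dca_sum_sq_le sc₁ sc₂ hG₁ hG₂ (n := N + 1)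
    fun k hk => hDCA k (Nat.lt_succ_iff.1 hk)
  rw [div_neg, neg_sq] at hgeom
  rw [add_add_mul_E_eq hμ₁.ne' hμ₂.ne, norm_sub_rev,
    le_div_iff₀ (mul_pos hsum (geom_sum_pos (sq_nonneg _) N.succ_ne_zero))]
  set S := ∑ k ∈ Finset.range (N + 1), ((μ₁ / μ₂) ^ 2) ^ k
  calc 1 / 2 * ‖x (N + 1) - x N‖ ^ 2 * ((μ₁ + μ₂) * S)
      = (μ₁ + μ₂) / 2 * (S * ‖x (N + 1) - x N‖ ^ 2) := by ring
    _ ≤ (μ₁ + μ₂) / 2 * ∑ k ∈ Finset.range (N + 1), ‖x (k + 1) - x k‖ ^ 2 :=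
        mul_le_mul_of_nonneg_left hgeom (by linarith)
    _ ≤ _ := hdesc

theorem stmt_16 {d : ℕ} (f₁ f₂ : EuclideanSpace ℝ (Fin d) → ℝ) (μ₁ L₁ μ₂ L₂ : ℝ)
    (hf₁ : Differentiable ℝ f₁) (hf₂ : Differentiable ℝ f₂)
    (h₁ : μ₁ < L₁) (h₂ : μ₂ < L₂)
    (hsum : μ₁ + μ₂ > 0) (hL₂μ₂ : L₂ + μ₂ ≤ 0)
    (hcL₁ : ConvexOn ℝ univ (fun x => L₁ / 2 * ‖x‖ ^ 2 - f₁ x))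
    (hcμ₁ : ConvexOn ℝ univ (fun x => f₁ x - μ₁ / 2 * ‖x‖ ^ 2))
    (hcL₂ : ConvexOn ℝ univ (fun x => L₂ / 2 * ‖x‖ ^ 2 - f₂ x))
    (hcμ₂ : ConvexOn ℝ univ (fun x => f₂ x - μ₂ / 2 * ‖x‖ ^ 2))
    (N : ℕ) (hN : N ≥ 1) (x : ℕ → EuclideanSpace ℝ (Fin d))
    (hDCA : ∀ k ≤ N, gradient f₁ (x (k + 1)) = gradient f₂ (x k)) :
    (1 / 2) * ‖x N - x (N + 1)‖ ^ 2 ≤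
      ((f₁ (x 0) - f₂ (x 0)) - (f₁ (x (N + 1)) - f₂ (x (N + 1)))) /
        (μ₁ + μ₂ + μ₁ * E N (μ₂ / μ₁)) :=
  stmt_16_general f₁ f₂ μ₁ μ₂ L₂ hf₁ hf₂ h₂ hsum hL₂μ₂ hcμ₁ hcL₂ hcμ₂ N x hDCA
end
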